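/- arXiv:1703.06605 — 2 statements merged into one kernel-verified Lean document; each statement's English description precedes it below -/
import Mathlib

section
/- Let C ∈ ℂ^{n×n} be Hermitian, and X feasible for the SDP: maximize trace(CX) subject to X Hermitian PSD with diag(X) = 1. If S(X) := Re(ddiag(CX)) - C is positive semidefinite, then X is optimal for this SDP, where ddiag sets off-diagonal entries to zero and Re takes real parts entrywise. -/
noncomputable section

namespace PhaseSync

open Complex

variable {n : ℕ}

/-- Euclidean (ℓ²) norm on `Fin n → ℂ`. -/
def l2norm (v : Fin n → ℂ) : ℝ :=
  Real.sqrt (∑ k, ‖v k‖ ^ 2)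

/-- Entrywise sup (ℓ∞) norm on `Fin n → ℂ`. -/
def linfnorm (v : Fin n → ℂ) : ℝ :=
  ⨆ k, ‖v k‖

/-- Hermitian inner product `x*y = ∑ₖ conj(xₖ) yₖ`. -/
def herm (x y : Fin n → ℂ) : ℂ :=
  ∑ k, (starRingEnd ℂ) (x k) * y k

/-- Distance up to a global phase: `d₂(x,y) = inf_θ ‖x e^{iθ} - y‖₂`. -/
def d2 (x y : Fin n → ℂ) : ℝ :=
  ⨅ θ : ℝ, l2norm (fun k => Complex.exp (θ * Complex.I) * x k - y k)

/-- Sup-norm distance up to a global phase. -/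
def dinf (x y : Fin n → ℂ) : ℝ :=
  ⨅ θ : ℝ, linfnorm (fun k => Complex.exp (θ * Complex.I) * x k - y k)

/-- ℓ² operator (spectral) norm of a matrix. -/
def opNorm (A : Matrix (Fin n) (Fin n) ℂ) : ℝ :=
  ⨆ u : {u : Fin n → ℂ // l2norm u = 1}, l2norm (A.mulVec u)

/-- Entrywise projection to the unit circle (on nonzero entries). -/
def proj (v : Fin n → ℂ) : Fin n → ℂ :=
  fun k => v k / ((‖v k‖ : ℝ) : ℂ)

/-- The rank-one matrix `z z*`. -/
def outer (z : Fin n → ℂ) : Matrix (Fin n) (Fin n) ℂ :=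
  Matrix.of fun i j => z i * (starRingEnd ℂ) (z j)

/-- The operator `ℒ v = (z*v/n) z + (σ/n) W v`. -/
def Lop (z : Fin n → ℂ) (σ : ℝ) (W : Matrix (Fin n) (Fin n) ℂ) (v : Fin n → ℂ) : Fin n → ℂ :=
  (herm z v / (n : ℂ)) • z + (σ / (n : ℝ)) • W.mulVec v

open scoped ComplexOrder

theorem _root_.Matrix.trace_diagonal_mul {ι R : Type*} [Fintype ι] [DecidableEq ι]
    [NonUnitalNonAssocSemiring R] (d : ι → R) (M : Matrix ι ι R) :
    (Matrix.diagonal d * M).trace = ∑ i, d i * M i i := by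
  simp [Matrix.trace, Matrix.diagonal_mul]

section

variable {ι 𝕜 : Type*} [Fintype ι] [RCLike 𝕜]

open Matrix

open scoped MatrixOrder in
theorem _root_.Matrix.PosSemidef.trace_mul_nonneg {A B : Matrix ι ι 𝕜} (hA : A.PosSemidef)
    (hB : B.PosSemidef) : 0 ≤ (A * B).trace := by
  classical
  obtain ⟨P, rfl⟩ := CStarAlgebra.nonneg_iff_eq_star_mul_self.mp hB.nonneg
  rw [star_eq_conjTranspose, ← Matrix.mul_assoc, trace_mul_cycle]
  exact (hA.mul_mul_conjTranspose_same P).trace_nonneg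

/-- Weak duality for the SDP `max tr(CY)` subject to `Y ⪰ 0`, `diag Y = 1`. -/
theorem trace_mul_le_sum_of_posSemidef_diagonal_sub [DecidableEq ι] {C Y : Matrix ι ι 𝕜}
    {d : ι → 𝕜} (hS : (diagonal d - C).PosSemidef) (hY : Y.PosSemidef)
    (hYd : ∀ i, Y i i = 1) : (C * Y).trace ≤ ∑ i, d i := by
  have h := hS.trace_mul_nonneg hY
  rwa [sub_mul, trace_sub, trace_diagonal_mul, sub_nonneg, Finset.sum_congr rfl
    fun i _ => by rw [hYd, mul_one]] at h

end

theorem stmt8_general (n : ℕ) (C X : Matrix (Fin n) (Fin n) ℂ)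
    (hS : (Matrix.diagonal (fun k => ((((C * X) k k).re : ℝ) : ℂ)) - C).PosSemidef) :
    ∀ Y : Matrix (Fin n) (Fin n) ℂ, Y.PosSemidef → (∀ k, Y k k = 1) →
      ((C * Y).trace).re ≤ ((C * X).trace).re := by
  intro Y hY hYd
  have hle := (Complex.le_def.mp (trace_mul_le_sum_of_posSemidef_diagonal_sub hS hY hYd)).1
  simpa only [Matrix.trace, Matrix.diag, Complex.re_sum, Complex.ofReal_re] using hle

/-- dual certificate sufficiency. If `S(X) = Re(ddiag(CX)) - C` is PSD,
then the feasible `X` is optimal for the SDP `max trace(CX), X ⪰ 0, diag X = 1`. -/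
theorem stmt8 (n : ℕ) (C X : Matrix (Fin n) (Fin n) ℂ) (hC : C.IsHermitian)
    (hX : X.PosSemidef) (hXd : ∀ k, X k k = 1)
    (hS : (Matrix.diagonal (fun k => ((((C * X) k k).re : ℝ) : ℂ)) - C).PosSemidef) :
    ∀ Y : Matrix (Fin n) (Fin n) ℂ, Y.PosSemidef → (∀ k, Y k k = 1) →
      ((C * Y).trace).re ≤ ((C * X).trace).re :=
  stmt8_general n C X hS

end PhaseSync
end
end

section
/- Let z ∈ ℂⁿ with unit-modulus entries, W, W' Hermitian, ℒx = (z*x/n)z + (σ/n)Wx and ℒ'y = (z*y/n)z + (σ/n)W'y. Suppose ‖x‖₂ = ‖y‖₂ = √n, d₂(x,z) ≤ ε₁√n, d₂(y,z) ≤ ε₂√n with ε₁, ε₂ ∈ (0,1/2), ‖Wx‖_∞ ≤ K₁√(n log n), ‖W'y‖_∞ ≤ K₂√(n log n). Set ε = max{ε₁²/2 + K₁σ√(log n/n), ε₂²/2 + K₂σ√(log n/n)}. If ε < 1, then every entry of ℒx and ℒ'y has modulus at least 1 - ε, and d₂(𝒫ℒx, 𝒫ℒ'y) ≤ (1-ε)^{-1}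 d₂(ℒx, ℒ'y). -/
/-!
Entrywise, `(ℒx)ₖ` is the signal `(z*x/n) zₖ`, of modulus `|z*x|/n`, plus noise of modulus at most
`σ K₁ √(n log n)/n`. Expanding `‖e^{iθ}x - z‖²` gives `‖x‖² + ‖z‖² ≤ d₂(x,z)² + 2|z*x|`, hence
`|z*x|/n ≥ 1 - ε₁²/2`, and the reverse triangle inequality bounds `|(ℒx)ₖ|` below by `1 - ε`.

For the contraction, in a real inner product space
`‖x‖‖y‖ ‖x/‖x‖ - y/‖y‖‖² = 2‖x‖‖y‖ - 2⟪x,y⟫ ≤ ‖x - y‖²`, so the projection to the unit circle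
is `(1-ε)⁻¹`-Lipschitz on entries of modulus at least `1 - ε`. It commutes with global phases,
so the entrywise bound passes to `d₂`.
-/


noncomputable section

namespace PhaseSync

open Complex

variable {n : ℕ}

section Normalize

variable {F : Type*} [NormedAddCommGroup F] [InnerProductSpace ℝ F]

theorem norm_mul_norm_mul_norm_normalize_sub_sq_le (x y : F) :
    ‖x‖ * ‖y‖ * ‖NormedSpace.normalize x - NormedSpace.normalize y‖ ^ 2 ≤ ‖x - y‖ ^ 2 := by
  rcases eq_or_ne x 0 with rfl | hx
  · simp
  rcases eq_or_ne y 0 with rfl | hy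
  · simp
  have hx' : 0 < ‖x‖ := norm_pos_iff.2 hx
  have hy' : 0 < ‖y‖ := norm_pos_iff.2 hy
  have hinner : inner ℝ (NormedSpace.normalize x) (NormedSpace.normalize y)
      = inner ℝ x y / (‖x‖ * ‖y‖) := by
    simp only [NormedSpace.normalize, real_inner_smul_left, real_inner_smul_right]
    field_simp
  rw [norm_sub_sq_real, norm_sub_sq_real, NormedSpace.norm_normalize_eq_one_iff.2 hx,
    NormedSpace.norm_normalize_eq_one_iff.2 hy, hinner]
  field_simp
  nlinarith [sq_nonneg (‖x‖ - ‖y‖)]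

theorem norm_normalize_sub_normalize_le {m : ℝ} (hm : 0 < m) {x y : F} (hx : m ≤ ‖x‖)
    (hy : m ≤ ‖y‖) : ‖NormedSpace.normalize x - NormedSpace.normalize y‖ ≤ ‖x - y‖ / m := by
  rw [le_div_iff₀ hm, ← pow_le_pow_iff_left₀ (by positivity) (norm_nonneg _) two_ne_zero]
  calc (‖NormedSpace.normalize x - NormedSpace.normalize y‖ * m) ^ 2
      ≤ ‖x‖ * ‖y‖ * ‖NormedSpace.normalize x - NormedSpace.normalize y‖ ^ 2 := by
        rw [mul_pow, mul_comm, sq]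
        gcongr
    _ ≤ ‖x - y‖ ^ 2 := norm_mul_norm_mul_norm_normalize_sub_sq_le x y

end Normalize

theorem div_norm_eq_normalize (a : ℂ) : a / (‖a‖ : ℂ) = NormedSpace.normalize a := by
  simp [NormedSpace.normalize, div_eq_inv_mul]

theorem sqrt_mul_div_eq_sqrt_div {a : ℝ} (ha : 0 ≤ a) (b : ℝ) : √(a * b) / a = √(b / a) := by
  rw [Real.sqrt_mul ha, Real.sqrt_div' _ ha]
  rcases ha.eq_or_lt with rfl | ha
  · simp
  · nth_rewrite 2 [← Real.mul_self_sqrt ha.le]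
    field_simp

theorem sq_l2norm (v : Fin n → ℂ) : l2norm v ^ 2 = ∑ k, ‖v k‖ ^ 2 :=
  Real.sq_sqrt (by positivity)

theorem l2norm_nonneg (v : Fin n → ℂ) : 0 ≤ l2norm v :=
  Real.sqrt_nonneg _

theorem l2norm_le_mul_of_forall_norm_le {c : ℝ} (hc : 0 ≤ c) {u v : Fin n → ℂ}
    (h : ∀ k, ‖u k‖ ≤ c * ‖v k‖) : l2norm u ≤ c * l2norm v := by
  rw [← pow_le_pow_iff_left₀ (l2norm_nonneg u) (by positivity [l2norm_nonneg v]) two_ne_zero,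
    mul_pow, sq_l2norm, sq_l2norm, Finset.mul_sum]
  gcongr with k
  rw [← mul_pow]
  exact pow_le_pow_left₀ (norm_nonneg _) (h k) 2

theorem d2_nonneg (x y : Fin n → ℂ) : 0 ≤ d2 x y :=
  le_ciInf fun _ => l2norm_nonneg _

theorem d2_le_l2norm (x y : Fin n → ℂ) (θ : ℝ) :
    d2 x y ≤ l2norm (fun k => exp (θ * I) * x k - y k) :=
  ciInf_le ⟨0, Set.forall_mem_range.2 fun _ => l2norm_nonneg _⟩ θ

theorem d2_proj_le {m : ℝ} (hm : 0 < m) {u v : Fin n → ℂ} (hu : ∀ k, m ≤ ‖u k‖)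
    (hv : ∀ k, m ≤ ‖v k‖) : d2 (proj u) (proj v) ≤ m⁻¹ * d2 u v := by
  rw [← div_eq_inv_mul, le_div_iff₀' hm]
  refine le_ciInf fun θ => ?_
  set e := exp (θ * I)
  have he : ‖e‖ = 1 := norm_exp_ofReal_mul_I θ
  have hpoint : ∀ k, ‖e * proj u k - proj v k‖ ≤ m⁻¹ * ‖e * u k - v k‖ := fun k => by
    have hrot : e * proj u k = NormedSpace.normalize (e * u k) := by
      rw [← div_norm_eq_normalize, norm_mul, he, one_mul, proj, mul_div_assoc]
    rw [hrot, proj, div_norm_eq_normalize, inv_mul_eq_div]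
    exact norm_normalize_sub_normalize_le hm (by rw [norm_mul, he, one_mul]; exact hu k) (hv k)
  calc m * d2 (proj u) (proj v) ≤ m * (m⁻¹ * l2norm (fun k => e * u k - v k)) := by
        gcongr
        exact (d2_le_l2norm _ _ θ).trans (l2norm_le_mul_of_forall_norm_le (by positivity) hpoint)
    _ = l2norm (fun k => e * u k - v k) := by field_simp

theorem sq_l2norm_mul_sub {e : ℂ} (he : ‖e‖ = 1) (x z : Fin n → ℂ) :
    l2norm (fun k => e * x k - z k) ^ 2
      = l2norm x ^ 2 + l2norm z ^ 2 - 2 * (e * herm z x).re := by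
  have hterm : ∀ k, ‖e * x k - z k‖ ^ 2
      = ‖x k‖ ^ 2 + ‖z k‖ ^ 2 - 2 * (e * ((starRingEnd ℂ) (z k) * x k)).re := fun k => by
    simp only [Complex.sq_norm, normSq_sub, normSq_mul, ← Complex.sq_norm e, he]
    ring_nf
  simp only [sq_l2norm, hterm, herm, Finset.mul_sum, re_sum, Finset.sum_sub_distrib,
    Finset.sum_add_distrib]

theorem sq_l2norm_add_sq_l2norm_le (x z : Fin n → ℂ) :
    l2norm x ^ 2 + l2norm z ^ 2 ≤ d2 x z ^ 2 + 2 * ‖herm z x‖ := by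
  set A := l2norm x ^ 2 + l2norm z ^ 2 - 2 * ‖herm z x‖
  have hphase : ∀ θ : ℝ, A ≤ l2norm (fun k => exp (θ * I) * x k - z k) ^ 2 := fun θ => by
    have he : ‖exp (θ * I)‖ = 1 := norm_exp_ofReal_mul_I θ
    have hre : (exp (θ * I) * herm z x).re ≤ ‖herm z x‖ := by
      simpa [he] using re_le_norm (exp (θ * I) * herm z x)
    rw [sq_l2norm_mul_sub he]
    linarith
  have hsqrt : √A ≤ d2 x z :=
    le_ciInf fun θ => (Real.sqrt_le_left (l2norm_nonneg _)).2 (hphase θ)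
  linarith [(Real.sqrt_le_left (d2_nonneg x z)).1 hsqrt]

theorem Lop_apply (z : Fin n → ℂ) (σ : ℝ) (W : Matrix (Fin n) (Fin n) ℂ) (v : Fin n → ℂ)
    (k : Fin n) : Lop z σ W v k = herm z v / n * z k + ((σ / n : ℝ) : ℂ) * (W.mulVec v) k := by
  simp only [Lop, Pi.add_apply, Pi.smul_apply, smul_eq_mul, real_smul]

theorem norm_le_linfnorm (v : Fin n → ℂ) (k : Fin n) : ‖v k‖ ≤ linfnorm v :=
  le_ciSup (f := fun k => ‖v k‖) (Set.finite_range _).bddAbove k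

theorem one_sub_le_norm_Lop_apply {z : Fin n → ℂ} (hz : ∀ k, ‖z k‖ = 1) {σ : ℝ} (hσ : 0 ≤ σ)
    {W : Matrix (Fin n) (Fin n) ℂ} {x : Fin n → ℂ} {K δ : ℝ} (hxn : l2norm x = √n)
    (hxz : d2 x z ≤ δ * √n) (hWx : linfnorm (W.mulVec x) ≤ K * √(n * Real.log n)) (k : Fin n) :
    1 - (δ ^ 2 / 2 + K * σ * √(Real.log n / n)) ≤ ‖Lop z σ W x k‖ := by
  have hn : (0 : ℝ) < n := Nat.cast_pos.2 k.pos
  have hz2 : l2norm z ^ 2 = n := by simp [sq_l2norm, hz]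
  have hd2 : d2 x z ^ 2 ≤ δ ^ 2 * n := by
    calc d2 x z ^ 2 ≤ (δ * √n) ^ 2 := pow_le_pow_left₀ (d2_nonneg x z) hxz 2
      _ = δ ^ 2 * n := by rw [mul_pow, Real.sq_sqrt hn.le]
  have hsignal : 1 - δ ^ 2 / 2 ≤ ‖herm z x / n * z k‖ := by
    have := sq_l2norm_add_sq_l2norm_le x z
    rw [hxn, hz2, Real.sq_sqrt hn.le] at this
    rw [norm_mul, hz k, mul_one, norm_div, Complex.norm_natCast, le_div_iff₀ hn]
    linarith
  have hnoise : ‖((σ / n : ℝ) : ℂ) * (W.mulVec x) k‖ ≤ K * σ * √(Real.log n / n) := by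
    rw [norm_mul, norm_real, Real.norm_of_nonneg (by positivity),
      ← sqrt_mul_div_eq_sqrt_div hn.le]
    calc σ / n * ‖(W.mulVec x) k‖ ≤ σ / n * (K * √(n * Real.log n)) := by
          gcongr
          exact (norm_le_linfnorm _ k).trans hWx
      _ = K * σ * (√(n * Real.log n) / n) := by ring
  rw [Lop_apply]
  linarith [norm_sub_le_norm_add (herm z x / n * z k) (((σ / n : ℝ) : ℂ) * (W.mulVec x) k)]

theorem stmt13_general (n : ℕ) (z : Fin n → ℂ) (hz : ∀ k, ‖z k‖ = 1)
    (W W' : Matrix (Fin n) (Fin n) ℂ)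
    (σ : ℝ) (hσ : 0 ≤ σ) (x y : Fin n → ℂ) (K₁ K₂ ε₁ ε₂ : ℝ)
    (hxn : l2norm x = Real.sqrt n) (hyn : l2norm y = Real.sqrt n)
    (hxz : d2 x z ≤ ε₁ * Real.sqrt n) (hyz : d2 y z ≤ ε₂ * Real.sqrt n)
    (hWx : linfnorm (W.mulVec x) ≤ K₁ * Real.sqrt (n * Real.log n))
    (hW'y : linfnorm (W'.mulVec y) ≤ K₂ * Real.sqrt (n * Real.log n))
    (ε : ℝ)
    (hεdef : ε = max (ε₁ ^ 2 / 2 + K₁ * σ * Real.sqrt (Real.log n / n))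
                     (ε₂ ^ 2 / 2 + K₂ * σ * Real.sqrt (Real.log n / n)))
    (hεlt : ε < 1) :
    (∀ k, 1 - ε ≤ ‖Lop z σ W x k‖ ∧ 1 - ε ≤ ‖Lop z σ W' y k‖) ∧
    d2 (proj (Lop z σ W x)) (proj (Lop z σ W' y)) ≤
      (1 - ε)⁻¹ * d2 (Lop z σ W x) (Lop z σ W' y) := by
  have hx : ∀ k, 1 - ε ≤ ‖Lop z σ W x k‖ := fun k =>
    (sub_le_sub_left (hεdef ▸ le_max_left _ _) 1).trans
      (one_sub_le_norm_Lop_apply hz hσ hxn hxz hWx k)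
  have hy : ∀ k, 1 - ε ≤ ‖Lop z σ W' y k‖ := fun k =>
    (sub_le_sub_left (hεdef ▸ le_max_right _ _) 1).trans
      (one_sub_le_norm_Lop_apply hz hσ hyn hyz hW'y k)
  exact ⟨fun k => ⟨hx k, hy k⟩, d2_proj_le (sub_pos.2 hεlt) hx hy⟩

/-- entrywise lower bounds on `ℒx`, `ℒ'y` and local contraction bound
`d₂(𝒫ℒx, 𝒫ℒ'y) ≤ (1-ε)⁻¹ d₂(ℒx, ℒ'y)`. -/
theorem stmt13 (n : ℕ) (hn : 0 < n) (z : Fin n → ℂ) (hz : ∀ k, ‖z k‖ = 1)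
    (W W' : Matrix (Fin n) (Fin n) ℂ) (hW : W.IsHermitian) (hW' : W'.IsHermitian)
    (σ : ℝ) (hσ : 0 ≤ σ) (x y : Fin n → ℂ) (K₁ K₂ ε₁ ε₂ : ℝ)
    (hK₁ : 0 < K₁) (hK₂ : 0 < K₂)
    (hε₁0 : 0 < ε₁) (hε₁ : ε₁ < 1 / 2) (hε₂0 : 0 < ε₂) (hε₂ : ε₂ < 1 / 2)
    (hxn : l2norm x = Real.sqrt n) (hyn : l2norm y = Real.sqrt n)
    (hxz : d2 x z ≤ ε₁ * Real.sqrt n) (hyz : d2 y z ≤ ε₂ * Real.sqrt n)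
    (hWx : linfnorm (W.mulVec x) ≤ K₁ * Real.sqrt (n * Real.log n))
    (hW'y : linfnorm (W'.mulVec y) ≤ K₂ * Real.sqrt (n * Real.log n))
    (ε : ℝ)
    (hεdef : ε = max (ε₁ ^ 2 / 2 + K₁ * σ * Real.sqrt (Real.log n / n))
                     (ε₂ ^ 2 / 2 + K₂ * σ * Real.sqrt (Real.log n / n)))
    (hεlt : ε < 1) :
    (∀ k, 1 - ε ≤ ‖Lop z σ W x k‖ ∧ 1 - ε ≤ ‖Lop z σ W' y k‖) ∧
    d2 (proj (Lop z σ W x)) (proj (Lop z σ W' y)) ≤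
      (1 - ε)⁻¹ * d2 (Lop z σ W x) (Lop z σ W' y) :=
  stmt13_general n z hz W W' σ hσ x y K₁ K₂ ε₁ ε₂ hxn hyn hxz hyz hWx hW'y ε hεdef hεlt

end PhaseSync
end
end
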